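/- Let κ ∈ (−∞, 1). For every t ∈ {0} ∪ [1, 2/(1 + max{κ,0})), there exists a unique s ∈ [1, 2/(1 + max{κ,0})) satisfying s·[(2−s)(2−κs) − 1]/(2 − s(1+κ)) + t/(2 − t(1+κ)) = 0, and this s satisfies s ≥ t. Consequently, the sequence (s_k)_{k≥−1} defined by s_{−1} = 0 and by letting s_{k+1} be this unique solution for t = s_k is uniquely defined, monotonically increasing, and converges to 2/(1 + max{κ,0}) as k → ∞. -/

import Mathlib

/-- A sequence `s : ℕ → ℝ` represents the dynamic stepsize schedule `(s_k(κ))_{k ≥ -1}`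
(with the index shifted by one, so `s 0 = s_{-1} = 0`): each next term lies in
`[1, 2/(1+[κ]₊))` and satisfies the defining recursion. -/
def IsDynamicStepsizeSeq (κ : ℝ) (s : ℕ → ℝ) : Prop :=
  s 0 = 0 ∧ ∀ k : ℕ,
    s (k + 1) ∈ Set.Ico (1 : ℝ) (2 / (1 + max κ 0)) ∧
    s (k + 1) * ((2 - s (k + 1)) * (2 - κ * s (k + 1)) - 1) / (2 - s (k + 1) * (1 + κ)) +
      s k / (2 - s k * (1 + κ)) = 0

/-!
Write `B = 2 / (1 + [κ]₊)`, `φ(s) = s[(2−s)(2−κs)−1]/(2−s(1+κ))` and `ψ(t) = t/(2−t(1+κ))`, so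
that the recursion reads `φ(s) + ψ(t) = 0`. On `[1, B)` the function `φ` is strictly decreasing,
since `φ'(s) = −2(s−1)(1−κs)(3−(1+κ)s)/(2−s(1+κ))²`, and `φ(1) = 1 > −ψ(t)`. Clearing the
positive denominator turns `φ(s) + ψ(t)` into a polynomial in `s` that is negative at `s = B`,
so the intermediate value theorem gives the unique solution. Since
`φ(s) + ψ(s) = s(2−s)(2−κs)/(2−s(1+κ)) > 0` on `(0, B)`, we get `φ(s) = −ψ(t) < φ(t)`, hence
`s > t`. The sequence is therefore increasing and bounded by `B`; a limit `L < B` would satisfy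
`φ(L) + ψ(L) = 0`, which is impossible.
-/

open Set Filter Topology

namespace DynamicStepsize

noncomputable def bound (κ : ℝ) : ℝ := 2 / (1 + max κ 0)

noncomputable def phi (κ x : ℝ) : ℝ := x * ((2 - x) * (2 - κ * x) - 1) / (2 - x * (1 + κ))

noncomputable def psi (κ x : ℝ) : ℝ := x / (2 - x * (1 + κ))

variable {κ : ℝ}

lemma bound_pos : 0 < bound κ := by
  unfold bound
  positivity

lemma bound_le_two : bound κ ≤ 2 := by
  unfold bound
  rw [div_le_iff₀ (by positivity)]
  linarith [le_max_right κ 0]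

lemma one_lt_bound (hκ : κ < 1) : 1 < bound κ := by
  unfold bound
  rw [lt_div_iff₀ (by positivity)]
  rcases le_total κ 0 with h | h
  · simp [max_eq_right h]
  · rw [max_eq_left h]; linarith

lemma bound_of_nonpos (hκ : κ ≤ 0) : bound κ = 2 := by
  simp [bound, max_eq_right hκ]

lemma bound_mul_of_nonneg (hκ : 0 ≤ κ) : bound κ * (1 + κ) = 2 := by
  rw [bound, max_eq_left hκ]
  field_simp

lemma denom_pos {x : ℝ} (h0 : 0 ≤ x) (hx : x < bound κ) : 0 < 2 - x * (1 + κ) := by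
  rcases le_total κ 0 with h | h
  · rw [bound_of_nonpos h] at hx
    nlinarith
  · nlinarith [bound_mul_of_nonneg h]

lemma mul_lt_one (hκ : κ < 1) {x : ℝ} (h0 : 0 ≤ x) (hx : x < bound κ) : κ * x < 1 := by
  rcases le_total κ 0 with h | h
  · nlinarith
  · nlinarith [bound_mul_of_nonneg h]

lemma phi_add_psi (x : ℝ) :
    phi κ x + psi κ x = x * (2 - x) * (2 - κ * x) / (2 - x * (1 + κ)) := by
  rw [phi, psi, ← add_div]
  ring_nf

lemma phi_add_psi_pos (hκ : κ < 1) {x : ℝ} (hx : x ∈ Ioo 0 (bound κ)) :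
    0 < phi κ x + psi κ x := by
  have h2 : 0 < 2 - x := by linarith [hx.2, bound_le_two (κ := κ)]
  have hκx : 0 < 2 - κ * x := by linarith [mul_lt_one hκ hx.1.le hx.2]
  have hd := denom_pos hx.1.le hx.2
  have hx0 := hx.1
  rw [phi_add_psi]
  positivity

lemma psi_nonneg {x : ℝ} (hx : x ∈ Ico 0 (bound κ)) : 0 ≤ psi κ x :=
  div_nonneg hx.1 (denom_pos hx.1 hx.2).le

lemma hasDerivAt_phi {x : ℝ} (hd : 2 - x * (1 + κ) ≠ 0) :
    HasDerivAt (phi κ)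
      (-2 * (x - 1) * (1 - κ * x) * (3 - (1 + κ) * x) / (2 - x * (1 + κ)) ^ 2) x := by
  have h₁ : HasDerivAt (fun y : ℝ => 2 - y) (-1) x := (hasDerivAt_id x).const_sub 2
  have h₂ : HasDerivAt (fun y : ℝ => 2 - κ * y) (-κ) x := by
    simpa using ((hasDerivAt_id x).const_mul κ).const_sub 2
  have hnum : HasDerivAt (fun y : ℝ => y * ((2 - y) * (2 - κ * y) - 1))
      (1 * ((2 - x) * (2 - κ * x) - 1) + x * (-1 * (2 - κ * x) + (2 - x) * -κ)) x :=
    (hasDerivAt_id x).mul ((h₁.mul h₂).sub_const 1)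
  have hden : HasDerivAt (fun y : ℝ => 2 - y * (1 + κ)) (-(1 * (1 + κ))) x :=
    ((hasDerivAt_id x).mul_const (1 + κ)).const_sub 2
  exact (hnum.div hden hd).congr_deriv (by ring)

lemma continuousOn_phi : ContinuousOn (phi κ) (Ico 1 (bound κ)) := fun x hx =>
  (hasDerivAt_phi (denom_pos (by linarith [hx.1]) hx.2).ne').continuousAt.continuousWithinAt

lemma strictAntiOn_phi (hκ : κ < 1) : StrictAntiOn (phi κ) (Ico 1 (bound κ)) := by
  refine strictAntiOn_of_deriv_neg (convex_Ico _ _) continuousOn_phi fun x hx => ?_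
  rw [interior_Ico] at hx
  have h0 : 0 ≤ x := by linarith [hx.1]
  have hd := denom_pos h0 hx.2
  have h₁ : 0 < x - 1 := by linarith [hx.1]
  have h₂ : 0 < 1 - κ * x := sub_pos.mpr (mul_lt_one hκ h0 hx.2)
  have h₃ : 0 < 3 - (1 + κ) * x := by linarith
  rw [(hasDerivAt_phi hd.ne').deriv]
  apply div_neg_of_neg_of_pos
  · nlinarith [mul_pos (mul_pos h₁ h₂) h₃]
  · positivity

lemma exists_phi_add_psi_eq_zero (hκ : κ < 1) {t : ℝ} (ht : t ∈ Ico 0 (bound κ)) :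
    ∃ s ∈ Ico 1 (bound κ), phi κ s + psi κ t = 0 := by
  set P : ℝ → ℝ := fun s => s * ((2 - s) * (2 - κ * s) - 1) + psi κ t * (2 - s * (1 + κ))
  have hψ := psi_nonneg ht
  have hP_one : 0 < P 1 := by
    have : P 1 = (1 - κ) * (1 + psi κ t) := by simp only [P]; ring
    rw [this]
    exact mul_pos (by linarith) (by linarith)
  have hP_bound : P (bound κ) < 0 := by
    rcases le_total κ 0 with h | h
    · have hd := denom_pos ht.1 ht.2
      have ht2 : t < 2 := bound_of_nonpos h ▸ ht.2
      have hψκ : psi κ t * -κ < 1 := by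
        rw [psi, div_mul_eq_mul_div, div_lt_one hd]
        linarith
      simp only [P, bound_of_nonpos h]
      linarith
    · have hB := bound_mul_of_nonneg h
      have hB1 := one_lt_bound hκ
      have hsq : κ * bound κ ^ 2 < 1 := by nlinarith [sq_nonneg (1 - κ)]
      simp only [P, hB, sub_self, mul_zero, add_zero]
      nlinarith
  have hP_cont : ContinuousOn P (Icc 1 (bound κ)) := by fun_prop
  obtain ⟨s, hs, hPs⟩ := intermediate_value_Icc' (one_lt_bound hκ).le hP_cont
    ⟨hP_bound.le, hP_one.le⟩
  have hsB : s < bound κ := lt_of_le_of_ne hs.2 (by rintro rfl; linarith)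
  refine ⟨s, ⟨hs.1, hsB⟩, ?_⟩
  have hd := denom_pos (by linarith [hs.1]) hsB
  rw [phi, div_add' _ _ _ hd.ne']
  exact div_eq_zero_iff.mpr (Or.inl hPs)

lemma existsUnique_phi_add_psi_eq_zero (hκ : κ < 1) {t : ℝ} (ht : t ∈ Ico 0 (bound κ)) :
    ∃! s, s ∈ Ico 1 (bound κ) ∧ phi κ s + psi κ t = 0 := by
  obtain ⟨s, hs, hst⟩ := exists_phi_add_psi_eq_zero hκ ht
  exact ⟨s, ⟨hs, hst⟩, fun y ⟨hy, hyt⟩ => (strictAntiOn_phi hκ).injOn hy hs (by linarith)⟩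

lemma le_of_phi_add_psi_eq_zero (hκ : κ < 1) {s t : ℝ} (ht : t ∈ Ico 0 (bound κ))
    (hs : s ∈ Ico 1 (bound κ)) (hst : phi κ s + psi κ t = 0) : t ≤ s := by
  by_contra! hlt
  have ht₁ : t ∈ Ico 1 (bound κ) := ⟨hs.1.trans hlt.le, ht.2⟩
  have := strictAntiOn_phi hκ hs ht₁ hlt
  have := phi_add_psi_pos hκ ⟨by linarith [ht₁.1], ht.2⟩
  linarith

noncomputable def next (κ t : ℝ) : ℝ :=
  Classical.epsilon fun s => s ∈ Ico 1 (bound κ) ∧ phi κ s + psi κ t = 0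

lemma next_spec (hκ : κ < 1) {t : ℝ} (ht : t ∈ Ico 0 (bound κ)) :
    next κ t ∈ Ico 1 (bound κ) ∧ phi κ (next κ t) + psi κ t = 0 :=
  Classical.epsilon_spec (p := fun s => s ∈ Ico 1 (bound κ) ∧ phi κ s + psi κ t = 0)
    (existsUnique_phi_add_psi_eq_zero hκ ht).exists

lemma isDynamicStepsizeSeq_iterate_next (hκ : κ < 1) :
    IsDynamicStepsizeSeq κ fun n => (next κ)^[n] 0 := by
  have hmem : ∀ n, (next κ)^[n] 0 ∈ Ico 0 (bound κ) := fun n => by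
    induction n with
    | zero => exact ⟨le_rfl, bound_pos⟩
    | succ n ih =>
      rw [Function.iterate_succ_apply']
      exact Ico_subset_Ico_left zero_le_one (next_spec hκ ih).1
  refine ⟨rfl, fun k => ?_⟩
  simp only [Function.iterate_succ_apply']
  exact next_spec hκ (hmem k)

end DynamicStepsize

namespace IsDynamicStepsizeSeq

open DynamicStepsize

variable {κ : ℝ} {s : ℕ → ℝ}

lemma mem_Ico (hs : IsDynamicStepsizeSeq κ s) : ∀ n, s n ∈ Ico 0 (bound κ)
  | 0 => by rw [hs.1]; exact ⟨le_rfl, bound_pos⟩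
  | n + 1 => Ico_subset_Ico_left zero_le_one (hs.2 n).1

lemma unique (hκ : κ < 1) {s' : ℕ → ℝ} (hs : IsDynamicStepsizeSeq κ s)
    (hs' : IsDynamicStepsizeSeq κ s') : s = s' := by
  funext n
  induction n with
  | zero => rw [hs.1, hs'.1]
  | succ n ih =>
    have h' := (hs'.2 n).2
    rw [← ih] at h'
    exact (existsUnique_phi_add_psi_eq_zero hκ (hs.mem_Ico n)).unique (hs.2 n) ⟨(hs'.2 n).1, h'⟩

lemma monotone (hκ : κ < 1) (hs : IsDynamicStepsizeSeq κ s) : Monotone s :=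
  monotone_nat_of_le_succ fun n =>
    le_of_phi_add_psi_eq_zero hκ (hs.mem_Ico n) (hs.2 n).1 (hs.2 n).2

lemma tendsto (hκ : κ < 1) (hs : IsDynamicStepsizeSeq κ s) :
    Tendsto s atTop (𝓝 (bound κ)) := by
  have hbdd : BddAbove (range s) := ⟨bound κ, by rintro _ ⟨n, rfl⟩; exact (hs.mem_Ico n).2.le⟩
  have hlim := tendsto_atTop_ciSup (hs.monotone hκ) hbdd
  set L := ⨆ n, s n
  have hL_le : L ≤ bound κ := ciSup_le fun n => (hs.mem_Ico n).2.le
  have hL_pos : 0 < L := zero_lt_one.trans_le ((hs.2 0).1.1.trans (le_ciSup hbdd 1))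
  suffices L = bound κ from this ▸ hlim
  by_contra hne
  have hLB : L < bound κ := lt_of_le_of_ne hL_le hne
  have hd := (denom_pos hL_pos.le hLB).ne'
  have hφ : Tendsto (fun n => phi κ (s (n + 1))) atTop (𝓝 (phi κ L)) :=
    (hasDerivAt_phi hd).continuousAt.tendsto.comp (hlim.comp (tendsto_add_atTop_nat 1))
  have hψ : Tendsto (fun n => psi κ (s n)) atTop (𝓝 (psi κ L)) :=
    (show ContinuousAt (psi κ) L from continuousAt_id.div (by fun_prop) hd).tendsto.comp hlim
  have hzero : phi κ L + psi κ L = 0 :=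
    tendsto_nhds_unique ((hφ.add hψ).congr fun n => (hs.2 n).2) tendsto_const_nhds
  linarith [phi_add_psi_pos hκ ⟨hL_pos, hLB⟩]

end IsDynamicStepsizeSeq

open DynamicStepsize in
/-- **Properties of the dynamic stepsize sequence (Proposition 5 /
`prop:properties_variable_stepsizes_sequence`).** For `κ < 1`: for every
`t ∈ {0} ∪ [1, 2/(1+[κ]₊))` there is a unique `s ∈ [1, 2/(1+[κ]₊))` satisfying
`s[(2−s)(2−κs)−1]/(2−s(1+κ)) + t/(2−t(1+κ)) = 0`, and it satisfies `s ≥ t`.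
Consequently the sequence `(s_k)_{k≥−1}` with `s_{−1}=0` exists, is uniquely defined,
is monotonically increasing, and converges to `2/(1+[κ]₊)`. -/
theorem dynamic_stepsize_sequence_properties (κ : ℝ) (hκ : κ < 1) :
    (∀ t : ℝ, (t = 0 ∨ t ∈ Set.Ico (1 : ℝ) (2 / (1 + max κ 0))) →
      (∃! s : ℝ, s ∈ Set.Ico (1 : ℝ) (2 / (1 + max κ 0)) ∧
        s * ((2 - s) * (2 - κ * s) - 1) / (2 - s * (1 + κ)) +
          t / (2 - t * (1 + κ)) = 0) ∧
      (∀ s : ℝ, s ∈ Set.Ico (1 : ℝ) (2 / (1 + max κ 0)) →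
        s * ((2 - s) * (2 - κ * s) - 1) / (2 - s * (1 + κ)) +
          t / (2 - t * (1 + κ)) = 0 → t ≤ s)) ∧
    (∃ s : ℕ → ℝ, IsDynamicStepsizeSeq κ s) ∧
    (∀ s₁ s₂ : ℕ → ℝ, IsDynamicStepsizeSeq κ s₁ → IsDynamicStepsizeSeq κ s₂ → s₁ = s₂) ∧
    (∀ s : ℕ → ℝ, IsDynamicStepsizeSeq κ s →
      Monotone s ∧ Filter.Tendsto s Filter.atTop (nhds (2 / (1 + max κ 0)))) := by
  refine ⟨fun t ht => ?_, ⟨_, isDynamicStepsizeSeq_iterate_next hκ⟩,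
    fun _ _ h₁ h₂ => h₁.unique hκ h₂, fun s hs => ⟨hs.monotone hκ, hs.tendsto hκ⟩⟩
  have ht₀ : t ∈ Ico 0 (bound κ) := by
    rcases ht with rfl | ht
    · exact ⟨le_rfl, bound_pos⟩
    · exact Ico_subset_Ico_left zero_le_one ht
  exact ⟨existsUnique_phi_add_psi_eq_zero hκ ht₀,
    fun s hs hst => le_of_phi_add_psi_eq_zero hκ ht₀ hs hst⟩
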